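/- Under the forward setting, let τ > 0, z > 0, and define r(θ) = Σ_{s=t}^{t+m} min( w_{s,t} |X_s² − θ|, τ ) · sgn( X_s² − θ ) and B₊(θ) = (σ_t² − θ) + ( κ†_t + 2(σ_t² − θ)² )/( n†_eff · τ ) + τ z. Then for every θ ∈ ℝ, P( r(θ) > B₊(θ) ) ≤ exp( −z + |δ_{0,t}|/τ + 2 δ_{1,t}/τ² ), and symmetrically P( r(θ) < (σ_t² − θ) − ( κ†_t + 2(σ_t² − θ)² )/( n†_eff · τ ) − τ z ) ≤ exp( −z + |δ_{0,t}|/τ + 2 δ_{1,t}/τ² ). -/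

import Mathlib

open MeasureTheory ProbabilityTheory Finset

/-!
Each summand of the score equals `clip τ (Z s)`, where `clip τ x = max (-τ) (min x τ)` and
`Z s = w s * (X s ^ 2 - θ)`. From `exp (clip 1 u) ≤ 1 + u + u ^ 2 ≤ exp (u + u ^ 2)`, the moment
generating function of `clip τ (Z s)` at `1 / τ` is at most `exp (E Z s / τ + E (Z s)² / τ²)`, so
independence and Chernoff's inequality give
`P (B ≤ ∑ clip τ (Z s)) ≤ exp (-B / τ + ∑ E Z s / τ + ∑ E (Z s)² / τ²)`.
Here `∑ E Z s = δ₀ + σ_t² - θ`, and `E (Z s)² = w_s² (κ_s + (σ_s² - θ)²)` together with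
`(σ_s² - θ)² ≤ 2 (σ_s² - σ_t²)² + 2 (σ_t² - θ)²` bounds the second sum by
`(κ† + 2 (σ_t² - θ)²) / n_eff + 2 δ₁`. The lower tail is the upper tail of `-Z`.
-/

namespace WeightedHuber

def clip (τ x : ℝ) : ℝ := max (-τ) (min x τ)

@[fun_prop]
lemma continuous_clip (τ : ℝ) : Continuous (clip τ) := by
  unfold clip; fun_prop

lemma abs_clip_le {τ : ℝ} (hτ : 0 ≤ τ) (x : ℝ) : |clip τ x| ≤ τ :=
  abs_le.2 ⟨le_max_left _ _, max_le (by linarith) (min_le_right _ _)⟩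

lemma clip_neg {τ : ℝ} (hτ : 0 ≤ τ) (x : ℝ) : clip τ (-x) = -clip τ x := by
  simp only [clip, max_def, min_def]
  split_ifs <;> linarith

lemma inv_mul_clip {τ : ℝ} (hτ : 0 < τ) (x : ℝ) : τ⁻¹ * clip τ x = clip 1 (x / τ) := by
  have hτ' : 0 ≤ τ⁻¹ := inv_nonneg.2 hτ.le
  simp only [clip, mul_max_of_nonneg _ _ hτ', mul_min_of_nonneg _ _ hτ', mul_neg,
    inv_mul_cancel₀ hτ.ne', div_eq_inv_mul]

lemma min_mul_abs_mul_sign_eq_clip {c τ : ℝ} (hc : 0 ≤ c) (hτ : 0 ≤ τ) (y : ℝ) :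
    min (c * |y|) τ * Real.sign y = clip τ (c * y) := by
  rcases lt_trichotomy y 0 with hy | rfl | hy
  · have : c * y ≤ 0 := mul_nonpos_of_nonneg_of_nonpos hc hy.le
    rw [Real.sign_of_neg hy, abs_of_neg hy, clip, min_eq_left (by linarith : c * y ≤ τ)]
    rw [mul_neg_one, ← max_neg_neg, mul_neg, neg_neg, max_comm]
  · simp [clip, hτ]
  · have : 0 ≤ c * y := mul_nonneg hc hy.le
    rw [Real.sign_of_pos hy, abs_of_pos hy, mul_one, clip, max_eq_right]
    exact le_min (by linarith) (by linarith)

lemma exp_clip_one_le (u : ℝ) : Real.exp (clip 1 u) ≤ 1 + u + u ^ 2 := by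
  rcases le_or_gt u (-1) with hu | hu
  · have : clip 1 u = -1 := by simp [clip, min_eq_left (by linarith : u ≤ 1), hu]
    rw [this]
    nlinarith [Real.exp_le_one_iff.2 (by norm_num : (-1 : ℝ) ≤ 0)]
  rcases le_or_gt u 1 with hu' | hu'
  · have : clip 1 u = u := by simp [clip, hu', hu.le]
    rw [this]
    have := (abs_le.1 (Real.abs_exp_sub_one_sub_id_le (abs_le.2 ⟨hu.le, hu'⟩))).2
    linarith
  · have : clip 1 u = 1 := by simp [clip, hu'.le]
    rw [this]
    nlinarith [Real.exp_one_lt_d9]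

variable {Ω ι : Type*} [MeasurableSpace Ω] {μ : Measure Ω} {Z : ι → Ω → ℝ}

lemma memLp_two_sq_of_integrable_pow_four {X : Ω → ℝ} (hX : AEStronglyMeasurable X μ)
    (h4 : Integrable (fun ω => X ω ^ 4) μ) : MemLp (fun ω => X ω ^ 2) 2 μ := by
  refine (memLp_two_iff_integrable_sq (by fun_prop)).2 ?_
  simpa only [← pow_mul] using h4

lemma integrable_exp_mul_sum_clip [IsFiniteMeasure μ] (hZ : ∀ i, AEMeasurable (Z i) μ)
    (s : Finset ι) (t : ℝ) {τ : ℝ} (hτ : 0 ≤ τ) :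
    Integrable (fun ω => Real.exp (t * ∑ i ∈ s, clip τ (Z i ω))) μ := by
  refine Integrable.of_bound (by fun_prop) (Real.exp (|t| * (s.card * τ)))
    (ae_of_all _ fun ω => ?_)
  rw [Real.norm_eq_abs, Real.abs_exp, Real.exp_le_exp]
  calc t * ∑ i ∈ s, clip τ (Z i ω) ≤ |t| * |∑ i ∈ s, clip τ (Z i ω)| := by
        rw [← abs_mul]; exact le_abs_self _
    _ ≤ |t| * ∑ i ∈ s, |clip τ (Z i ω)| := by gcongr; exact abs_sum_le_sum_abs _ _
    _ ≤ |t| * ∑ _i ∈ s, τ := by gcongr with i; exact abs_clip_le hτ _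
    _ = |t| * (s.card * τ) := by rw [sum_const, nsmul_eq_mul]

variable [IsProbabilityMeasure μ]

lemma integral_exp_clip_one_le {V : Ω → ℝ} (hV : MemLp V 2 μ) :
    ∫ ω, Real.exp (clip 1 (V ω)) ∂μ ≤ Real.exp ((∫ ω, V ω ∂μ) + ∫ ω, V ω ^ 2 ∂μ) := by
  have hV1 : Integrable V μ := hV.integrable one_le_two
  have hV2 : Integrable (fun ω => V ω ^ 2) μ := hV.integrable_sq
  have hexp : Integrable (fun ω => Real.exp (clip 1 (V ω))) μ := by
    have hVmeas := hV1.aemeasurable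
    refine Integrable.of_bound (by fun_prop) (Real.exp 1) (ae_of_all _ fun ω => ?_)
    rw [Real.norm_eq_abs, Real.abs_exp, Real.exp_le_exp]
    exact (le_abs_self _).trans (abs_clip_le zero_le_one _)
  calc ∫ ω, Real.exp (clip 1 (V ω)) ∂μ ≤ ∫ ω, (1 + V ω + V ω ^ 2) ∂μ :=
        integral_mono hexp ((integrable_const 1).add hV1 |>.add hV2)
          fun ω => exp_clip_one_le (V ω)
    _ = 1 + (∫ ω, V ω ∂μ) + ∫ ω, V ω ^ 2 ∂μ := by
        rw [integral_add (f := fun ω => 1 + V ω) ((integrable_const 1).add hV1) hV2,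
          integral_add (integrable_const 1) hV1]
        simp
    _ ≤ _ := by linarith [Real.add_one_le_exp ((∫ ω, V ω ∂μ) + ∫ ω, V ω ^ 2 ∂μ)]

lemma integral_mul_sub_const {Y : Ω → ℝ} (hY : Integrable Y μ) (c θ : ℝ) :
    ∫ ω, c * (Y ω - θ) ∂μ = c * ((∫ ω, Y ω ∂μ) - θ) := by
  rw [integral_const_mul, integral_sub hY (integrable_const θ), integral_const, probReal_univ,
    one_smul]

lemma integral_sub_const_sq {Y : Ω → ℝ} (hY : MemLp Y 2 μ) (θ : ℝ) :
    ∫ ω, (Y ω - θ) ^ 2 ∂μ = ∫ ω, Y ω ^ 2 ∂μ - 2 * θ * ∫ ω, Y ω ∂μ + θ ^ 2 := by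
  have hY1 : Integrable Y μ := hY.integrable one_le_two
  have hY2 : Integrable (fun ω => Y ω ^ 2) μ := hY.integrable_sq
  have hexpand : (fun ω => (Y ω - θ) ^ 2) = fun ω => Y ω ^ 2 - 2 * θ * Y ω + θ ^ 2 := by
    funext ω; ring
  rw [hexpand, integral_add (f := fun ω => Y ω ^ 2 - 2 * θ * Y ω)
    (hY2.sub (hY1.const_mul _)) (integrable_const _), integral_sub hY2 (hY1.const_mul _),
    integral_const_mul]
  simp

lemma integral_mul_sub_const_sq {Y : Ω → ℝ} (hY : MemLp Y 2 μ) (c θ : ℝ) :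
    ∫ ω, (c * (Y ω - θ)) ^ 2 ∂μ
      = c ^ 2 * (∫ ω, (Y ω - ∫ ω, Y ω ∂μ) ^ 2 ∂μ + ((∫ ω, Y ω ∂μ) - θ) ^ 2) := by
  simp only [mul_pow]
  rw [integral_const_mul, integral_sub_const_sq hY, integral_sub_const_sq hY]
  ring

lemma mgf_clip_le {Y : Ω → ℝ} (hY : MemLp Y 2 μ) {τ : ℝ} (hτ : 0 < τ) :
    mgf (fun ω => clip τ (Y ω)) μ τ⁻¹
      ≤ Real.exp ((∫ ω, Y ω ∂μ) / τ + (∫ ω, Y ω ^ 2 ∂μ) / τ ^ 2) :=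
  calc mgf (fun ω => clip τ (Y ω)) μ τ⁻¹ = ∫ ω, Real.exp (clip 1 (Y ω / τ)) ∂μ := by
        simp only [mgf, inv_mul_clip hτ]
    _ ≤ Real.exp ((∫ ω, Y ω / τ ∂μ) + ∫ ω, (Y ω / τ) ^ 2 ∂μ) :=
        integral_exp_clip_one_le (by simpa only [div_eq_mul_inv] using hY.mul_const τ⁻¹)
    _ = _ := by simp only [div_pow, integral_div]

theorem measure_sum_clip_ge_le (hind : iIndepFun Z μ) (hZ : ∀ i, MemLp (Z i) 2 μ)
    (s : Finset ι) {τ : ℝ} (hτ : 0 < τ) (B : ℝ) :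
    μ {ω | B ≤ ∑ i ∈ s, clip τ (Z i ω)} ≤ ENNReal.ofReal (Real.exp (-B / τ
      + (∑ i ∈ s, ∫ ω, Z i ω ∂μ) / τ + (∑ i ∈ s, ∫ ω, Z i ω ^ 2 ∂μ) / τ ^ 2)) := by
  have hZmeas : ∀ i, AEMeasurable (Z i) μ := fun i => (hZ i).aestronglyMeasurable.aemeasurable
  have hchernoff := measure_ge_le_exp_mul_mgf B (inv_nonneg.2 hτ.le)
    (integrable_exp_mul_sum_clip hZmeas s τ⁻¹ hτ.le)
  rw [← ofReal_measureReal]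
  refine ENNReal.ofReal_le_ofReal (hchernoff.trans ?_)
  have hmgf_sum : mgf (fun ω => ∑ i ∈ s, clip τ (Z i ω)) μ τ⁻¹
      = ∏ i ∈ s, mgf (fun ω => clip τ (Z i ω)) μ τ⁻¹ := by
    simpa only [Finset.sum_fn, Function.comp_def] using
      (hind.comp _ fun _ => (continuous_clip τ).measurable).mgf_sum₀ (by fun_prop) s
  calc Real.exp (-τ⁻¹ * B) * mgf (fun ω => ∑ i ∈ s, clip τ (Z i ω)) μ τ⁻¹
      ≤ Real.exp (-τ⁻¹ * B) *
          ∏ i ∈ s, Real.exp ((∫ ω, Z i ω ∂μ) / τ + (∫ ω, Z i ω ^ 2 ∂μ) / τ ^ 2) := by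
        rw [hmgf_sum]
        gcongr with i
        · exact fun i _ => mgf_nonneg
        · exact mgf_clip_le (hZ i) hτ
    _ = _ := by
        rw [← Real.exp_sum, ← Real.exp_add, sum_add_distrib, ← sum_div, ← sum_div]
        ring_nf

theorem measure_sum_clip_gt_le (hind : iIndepFun Z μ) (hZ : ∀ i, MemLp (Z i) 2 μ)
    (s : Finset ι) {τ : ℝ} (hτ : 0 < τ) {a c δ δ₁ W neff z : ℝ} (hneff : neff = 1 / W)
    (h1 : ∑ i ∈ s, ∫ ω, Z i ω ∂μ = δ + a)
    (h2 : ∑ i ∈ s, ∫ ω, Z i ω ^ 2 ∂μ ≤ c * W + 2 * δ₁) :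
    μ {ω | a + c / (neff * τ) + τ * z < ∑ i ∈ s, clip τ (Z i ω)}
      ≤ ENNReal.ofReal (Real.exp (-z + |δ| / τ + 2 * δ₁ / τ ^ 2)) := by
  refine (measure_mono (Set.ofPred_subset_ofPred.2 fun ω hω => hω.le)).trans
    ((measure_sum_clip_ge_le hind hZ s hτ (a + c / (neff * τ) + τ * z)).trans
      (ENNReal.ofReal_le_ofReal (Real.exp_le_exp.2 ?_)))
  have hB : (a + c / (neff * τ) + τ * z) / τ = a / τ + c * W / τ ^ 2 + z := by
    rw [hneff]; field_simp
  have hM : (∑ i ∈ s, ∫ ω, Z i ω ^ 2 ∂μ) / τ ^ 2 ≤ c * W / τ ^ 2 + 2 * δ₁ / τ ^ 2 := by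
    rw [← add_div]; gcongr
  have hδ : δ / τ ≤ |δ| / τ := by gcongr; exact le_abs_self δ
  rw [neg_div, hB, h1, add_div]
  linarith

theorem measure_sum_clip_lt_le (hind : iIndepFun Z μ) (hZ : ∀ i, MemLp (Z i) 2 μ)
    (s : Finset ι) {τ : ℝ} (hτ : 0 < τ) {a c δ δ₁ W neff z : ℝ} (hneff : neff = 1 / W)
    (h1 : ∑ i ∈ s, ∫ ω, Z i ω ∂μ = δ + a)
    (h2 : ∑ i ∈ s, ∫ ω, Z i ω ^ 2 ∂μ ≤ c * W + 2 * δ₁) :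
    μ {ω | ∑ i ∈ s, clip τ (Z i ω) < a - c / (neff * τ) - τ * z}
      ≤ ENNReal.ofReal (Real.exp (-z + |δ| / τ + 2 * δ₁ / τ ^ 2)) := by
  have hneg := measure_sum_clip_gt_le (Z := fun i ω => -Z i ω)
    (hind.comp (fun _ x => -x) fun _ => measurable_neg) (fun i => (hZ i).neg) s hτ
    (a := -a) (δ := -δ) (z := z) hneff
    (by rw [← neg_add, ← h1, ← sum_neg_distrib]; simp only [integral_neg])
    (by simpa only [neg_sq] using h2)
  rw [abs_neg] at hneg
  refine (measure_mono fun ω hω => ?_).trans hneg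
  simp only [Set.mem_ofPred_eq, clip_neg hτ.le, sum_neg_distrib] at hω ⊢
  linarith

lemma pow_div_sum_pow_props {lam : ℝ} (hlam : 0 < lam) {m : ℕ} {w : ℕ → ℝ}
    (hw : ∀ i, w i = lam ^ i / ∑ j ∈ range (m + 1), lam ^ j) :
    (∀ i, 0 ≤ w i) ∧ ∑ i ∈ range (m + 1), w i = 1 ∧ 0 < ∑ i ∈ range (m + 1), w i ^ 2 := by
  have hS : 0 < ∑ j ∈ range (m + 1), lam ^ j := sum_pos (fun j _ => pow_pos hlam j) (by simp)
  refine ⟨fun i => by rw [hw]; positivity, ?_,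
    sum_pos' (fun i _ => sq_nonneg _) ⟨0, by simp, by rw [hw]; positivity⟩⟩
  simp only [hw]
  rw [← sum_div, div_self hS.ne']

lemma sum_sq_mul_add_sub_sq_le (s : Finset ℕ) (w k v : ℕ → ℝ) (v₀ θ : ℝ) :
    ∑ i ∈ s, w i ^ 2 * (k i + (v i - θ) ^ 2) ≤ ∑ i ∈ s, w i ^ 2 * k i
      + 2 * ∑ i ∈ s, w i ^ 2 * (v i - v₀) ^ 2 + 2 * (v₀ - θ) ^ 2 * ∑ i ∈ s, w i ^ 2 := by
  simp only [mul_sum, ← sum_add_distrib]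
  gcongr with i
  nlinarith [sq_nonneg (w i), sq_nonneg (v i - v₀ - (v₀ - θ))]

end WeightedHuber

open WeightedHuber

theorem weighted_huber_score_tail_bound_general
    {Ω : Type*} [MeasurableSpace Ω] (μ : Measure Ω) [IsProbabilityMeasure μ]
    (X : ℤ → Ω → ℝ) (σ κ : ℤ → ℝ)
    (hXmeas : ∀ s, Measurable (X s))
    (hindep : iIndepFun X μ)
    (hvar : ∀ s, ∫ ω, (X s ω) ^ 2 ∂μ = (σ s) ^ 2)
    (hκ : ∀ s, ∫ ω, ((X s ω) ^ 2 - (σ s) ^ 2) ^ 2 ∂μ = κ s)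
    (hX4int : ∀ s, Integrable (fun ω => (X s ω) ^ 4) μ)
    (t : ℤ) (m : ℕ) (lam : ℝ) (hlam : lam ∈ Set.Ioo (0 : ℝ) 1)
    (w : ℕ → ℝ) (hw : ∀ i, w i = lam ^ i / ∑ j ∈ Finset.range (m + 1), lam ^ j)
    (neff κdag δ0 δ1 : ℝ)
    (hneff : neff = 1 / ∑ i ∈ Finset.range (m + 1), (w i) ^ 2)
    (hκdag : κdag = (∑ i ∈ Finset.range (m + 1), (w i) ^ 2 * κ (t + i)) /
      ∑ i ∈ Finset.range (m + 1), (w i) ^ 2)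
    (hδ0 : δ0 = (∑ i ∈ Finset.range (m + 1), w i * (σ (t + i)) ^ 2) - (σ t) ^ 2)
    (hδ1 : δ1 = ∑ i ∈ Finset.range (m + 1), (w i) ^ 2 * ((σ (t + i)) ^ 2 - (σ t) ^ 2) ^ 2)
    (τ z : ℝ) (hτ : 0 < τ) (θ : ℝ) :
    (μ {ω | ∑ i ∈ Finset.range (m + 1),
          min (w i * |(X (t + i) ω) ^ 2 - θ|) τ * Real.sign ((X (t + i) ω) ^ 2 - θ)
        > ((σ t) ^ 2 - θ) + (κdag + 2 * ((σ t) ^ 2 - θ) ^ 2) / (neff * τ) + τ * z}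
      ≤ ENNReal.ofReal (Real.exp (-z + |δ0| / τ + 2 * δ1 / τ ^ 2))) ∧
    (μ {ω | ∑ i ∈ Finset.range (m + 1),
          min (w i * |(X (t + i) ω) ^ 2 - θ|) τ * Real.sign ((X (t + i) ω) ^ 2 - θ)
        < ((σ t) ^ 2 - θ) - (κdag + 2 * ((σ t) ^ 2 - θ) ^ 2) / (neff * τ) - τ * z}
      ≤ ENNReal.ofReal (Real.exp (-z + |δ0| / τ + 2 * δ1 / τ ^ 2))) := by
  obtain ⟨hw0, hwsum, hW⟩ := pow_div_sum_pow_props hlam.1 hw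
  have hX2 : ∀ s, MemLp (fun ω => X s ω ^ 2) 2 μ := fun s =>
    memLp_two_sq_of_integrable_pow_four (hXmeas s).aestronglyMeasurable (hX4int s)
  set a := σ t ^ 2 - θ
  set Z : ℕ → Ω → ℝ := fun i ω => w i * (X (t + i) ω ^ 2 - θ)
  have hZind : iIndepFun Z μ :=
    (hindep.precomp (fun i j h => by simpa using h : Function.Injective fun i : ℕ => t + i)).comp
      (fun i x => w i * (x ^ 2 - θ)) fun i => by fun_prop
  have hZ : ∀ i, MemLp (Z i) 2 μ := fun i => ((hX2 _).sub (memLp_const θ)).const_mul _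
  have hZ1 : ∀ i, ∫ ω, Z i ω ∂μ = w i * (σ (t + i) ^ 2 - θ) := fun i =>
    (integral_mul_sub_const ((hX2 _).integrable one_le_two) _ _).trans (by rw [hvar])
  have hZ2 : ∀ i, ∫ ω, Z i ω ^ 2 ∂μ = w i ^ 2 * (κ (t + i) + (σ (t + i) ^ 2 - θ) ^ 2) :=
    fun i => (integral_mul_sub_const_sq (hX2 _) _ _).trans (by rw [hvar, hκ])
  have hmean : ∑ i ∈ range (m + 1), ∫ ω, Z i ω ∂μ = δ0 + a := by
    simp only [hZ1, mul_sub, sum_sub_distrib, ← sum_mul, hwsum, hδ0, a]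
    ring
  have hsecond : ∑ i ∈ range (m + 1), ∫ ω, Z i ω ^ 2 ∂μ
      ≤ (κdag + 2 * a ^ 2) * ∑ i ∈ range (m + 1), w i ^ 2 + 2 * δ1 := by
    have hκsum : ∑ i ∈ range (m + 1), w i ^ 2 * κ (t + i)
        = κdag * ∑ i ∈ range (m + 1), w i ^ 2 := by
      rw [hκdag, div_mul_cancel₀ _ hW.ne']
    simp only [hZ2]
    linarith [sum_sq_mul_add_sub_sq_le (range (m + 1)) w (fun i => κ (t + i))
      (fun i => σ (t + i) ^ 2) (σ t ^ 2) θ]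
  simp only [fun i ω => min_mul_abs_mul_sign_eq_clip (hw0 i) hτ.le ((X (t + i) ω) ^ 2 - θ)]
  exact ⟨measure_sum_clip_gt_le hZind hZ _ hτ hneff hmean hsecond,
    measure_sum_clip_lt_le hZind hZ _ hτ hneff hmean hsecond⟩

/-- Chernoff tail bound for the weighted Huber score (proof of Theorem 1):
`P(r(θ) > B₊(θ)) ≤ exp(−z + |δ₀ₜ|/τ + 2δ₁ₜ/τ²)` and symmetrically for the lower tail. -/
theorem weighted_huber_score_tail_bound
    {Ω : Type*} [MeasurableSpace Ω] (μ : Measure Ω) [IsProbabilityMeasure μ]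
    (X : ℤ → Ω → ℝ) (σ κ : ℤ → ℝ)
    (hXmeas : ∀ s, Measurable (X s))
    (hindep : iIndepFun X μ)
    (hmean : ∀ s, ∫ ω, X s ω ∂μ = 0)
    (hvar : ∀ s, ∫ ω, (X s ω) ^ 2 ∂μ = (σ s) ^ 2)
    (hσpos : ∀ s, 0 < σ s)
    (hκ : ∀ s, ∫ ω, ((X s ω) ^ 2 - (σ s) ^ 2) ^ 2 ∂μ = κ s)
    (hX4int : ∀ s, Integrable (fun ω => (X s ω) ^ 4) μ)
    (t : ℤ) (m : ℕ) (lam : ℝ) (hlam : lam ∈ Set.Ioo (0 : ℝ) 1)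
    (w : ℕ → ℝ) (hw : ∀ i, w i = lam ^ i / ∑ j ∈ Finset.range (m + 1), lam ^ j)
    (neff κdag δ0 δ1 : ℝ)
    (hneff : neff = 1 / ∑ i ∈ Finset.range (m + 1), (w i) ^ 2)
    (hκdag : κdag = (∑ i ∈ Finset.range (m + 1), (w i) ^ 2 * κ (t + i)) /
      ∑ i ∈ Finset.range (m + 1), (w i) ^ 2)
    (hδ0 : δ0 = (∑ i ∈ Finset.range (m + 1), w i * (σ (t + i)) ^ 2) - (σ t) ^ 2)
    (hδ1 : δ1 = ∑ i ∈ Finset.range (m + 1), (w i) ^ 2 * ((σ (t + i)) ^ 2 - (σ t) ^ 2) ^ 2)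
    (τ z : ℝ) (hτ : 0 < τ) (hz : 0 < z) (θ : ℝ) :
    (μ {ω | ∑ i ∈ Finset.range (m + 1),
          min (w i * |(X (t + i) ω) ^ 2 - θ|) τ * Real.sign ((X (t + i) ω) ^ 2 - θ)
        > ((σ t) ^ 2 - θ) + (κdag + 2 * ((σ t) ^ 2 - θ) ^ 2) / (neff * τ) + τ * z}
      ≤ ENNReal.ofReal (Real.exp (-z + |δ0| / τ + 2 * δ1 / τ ^ 2))) ∧
    (μ {ω | ∑ i ∈ Finset.range (m + 1),
          min (w i * |(X (t + i) ω) ^ 2 - θ|) τ * Real.sign ((X (t + i) ω) ^ 2 - θ)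
        < ((σ t) ^ 2 - θ) - (κdag + 2 * ((σ t) ^ 2 - θ) ^ 2) / (neff * τ) - τ * z}
      ≤ ENNReal.ofReal (Real.exp (-z + |δ0| / τ + 2 * δ1 / τ ^ 2))) :=
  weighted_huber_score_tail_bound_general μ X σ κ hXmeas hindep hvar hκ hX4int t m lam hlam w hw
    neff κdag δ0 δ1 hneff hκdag hδ0 hδ1 τ z hτ θ
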